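/- arXiv:2605.06953 — 2 statements merged into one kernel-verified Lean document; each statement's English description precedes it below -/
import Mathlib

section
/- Let t ≥ 1 be an integer and suppose s(n) satisfies n − s(n) = o(n^{t/(t+1)}) and n − s(n) = ω(n^{(t−1)/t}). If Y_n denotes the number of uniform s(n)-subset draws needed to collect all n coupons, then Y_n converges in probability to t+1 and lim_{n→∞} E[Y_n] = t+1. -/
open Finset Filter
open scoped Classical

noncomputable section

/-- All tuples of `i` draws, each draw being an `s`-element subset of the `n` coupons.
The drawing process is uniform on this finite set. -/
def draws (n s i : ℕ) : Finset (Fin i → Finset (Fin n)) :=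
  Finset.univ.filter (fun f => ∀ j, (f j).card = s)

/-- The probability, under `i` independent uniform `s`-subset draws from `n` coupons,
of the event `p`. -/
def pr (n s i : ℕ) (p : (Fin i → Finset (Fin n)) → Prop) : ℝ :=
  (((draws n s i).filter p).card : ℝ) / ((draws n s i).card : ℝ)

/-- The event that every coupon has appeared in at least one of the draws. -/
def collected {n i : ℕ} (f : Fin i → Finset (Fin n)) : Prop :=
  ∀ t : Fin n, ∃ j, t ∈ f j

/-- The number of coupons missed by all the draws. -/
def missed {n i : ℕ} (f : Fin i → Finset (Fin n)) : ℕ :=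
  (Finset.univ.filter (fun t : Fin n => ∀ j, t ∉ f j)).card

/-- `P(Y ≥ i)`: the probability that the collection is not complete after `i − 1` draws,
where `Y` is the number of draws needed to collect all `n` coupons. -/
def PYge (n s i : ℕ) : ℝ := pr n s (i - 1) (fun f => ¬ collected f)

/-- `P(Y ≤ i)`: the probability that the collection is complete after `i` draws. -/
def PYle (n s i : ℕ) : ℝ := pr n s i (fun f => collected f)

/-- `P(Y = i)`. -/
def PYeq (n s i : ℕ) : ℝ := PYle n s i - if i = 0 then 0 else PYle n s (i - 1)

/-- `E[Y]`, via the tail-sum formula `E[Y] = ∑_{i≥1} P(Y ≥ i) = ∑_{i≥0} P(Y > i)`. -/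
def EY (n s : ℕ) : ℝ := ∑' i : ℕ, pr n s i (fun f => ¬ collected f)

end

/-!
Let `q = (n - s) / n` be the probability that a fixed coupon avoids one draw, and `X` the number
of coupons missed by `i` draws. Then `E X = n qⁱ =: a` and, since two fixed coupons avoid a draw
with probability at most `q²`, `E X² ≤ a + a²`. The first and second moment methods give
`a / (1 + a) ≤ P(X ≠ 0) ≤ a`. The hypotheses say precisely that `n qᵗ → ∞` and `n qᵗ⁺¹ → 0`,
so `P(Y > i) → 1` for every `i ≤ t`, while `∑_{i > t} P(Y > i) ≤ n qᵗ⁺¹ / (1 - q) → 0`.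
-/

section SecondMoment

variable {ι : Type*} (D : Finset ι)

lemma card_filter_ne_zero_le_sum (X : ι → ℕ) : #{x ∈ D | X x ≠ 0} ≤ ∑ x ∈ D, X x := by
  rw [card_eq_sum_ones, ← sum_filter_ne_zero D]
  exact sum_le_sum fun x hx => Nat.one_le_iff_ne_zero.2 (mem_filter.1 hx).2

lemma sq_sum_le_card_filter_ne_zero_mul_sum_sq (X : ι → ℝ) :
    (∑ x ∈ D, X x) ^ 2 ≤ #{x ∈ D | X x ≠ 0} * ∑ x ∈ D, X x ^ 2 := by
  rw [← sum_filter_ne_zero D]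
  refine sq_sum_le_card_mul_sum_sq.trans (mul_le_mul_of_nonneg_left ?_ (Nat.cast_nonneg _))
  exact sum_le_sum_of_subset_of_nonneg (filter_subset _ D) fun _ _ _ => sq_nonneg _

end SecondMoment

lemma div_rpow_pow_eq {x : ℝ} (m : ℝ) (hx : 0 < x) {k : ℕ} (hk : 1 ≤ k) :
    (m / x ^ (((k : ℝ) - 1) / k)) ^ k = x * (m / x) ^ k := by
  have hk' : (k : ℝ) ≠ 0 := by positivity
  have hpow : (x ^ (((k : ℝ) - 1) / k)) ^ k = x ^ k / x := by
    rw [← Real.rpow_natCast, ← Real.rpow_mul hx.le, div_mul_cancel₀ _ hk', Real.rpow_sub hx,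
      Real.rpow_one, Real.rpow_natCast]
  rw [div_pow, hpow, div_pow]
  field_simp

lemma div_one_add_le_div_one_add {x y : ℝ} (hx : 0 ≤ x) (hxy : x ≤ y) :
    x / (1 + x) ≤ y / (1 + y) := by
  rw [div_le_div_iff₀ (by linarith) (by linarith)]
  linarith

lemma Filter.Tendsto.div_one_add_self {α : Type*} {l : Filter α} {f : α → ℝ}
    (hf : Tendsto f l atTop) : Tendsto (fun x => f x / (1 + f x)) l (nhds 1) := by
  have hinv : Tendsto (fun x => 1 - (1 + f x)⁻¹) l (nhds (1 - 0)) :=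
    tendsto_const_nhds.sub (tendsto_inv_atTop_zero.comp (tendsto_atTop_add_const_left _ 1 hf))
  rw [sub_zero] at hinv
  refine hinv.congr' ((hf.eventually_ge_atTop 0).mono fun x hx => ?_)
  field_simp
  ring

namespace CouponCollector

lemma draws_eq_piFinset (n s i : ℕ) :
    draws n s i = Fintype.piFinset fun _ => powersetCard s (univ : Finset (Fin n)) := by
  ext f
  simp [draws, Fintype.mem_piFinset, mem_powersetCard]

lemma card_draws (n s i : ℕ) : #(draws n s i) = n.choose s ^ i := by
  simp [draws_eq_piFinset, card_powersetCard]

lemma card_draws_avoiding (n s i : ℕ) (T : Finset (Fin n)) :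
    #{f ∈ draws n s i | ∀ j, Disjoint T (f j)} = (n - #T).choose s ^ i := by
  have : {f ∈ draws n s i | ∀ j, Disjoint T (f j)}
      = Fintype.piFinset fun _ => powersetCard s (univ \ T) := by
    ext f
    simp only [draws, mem_filter, mem_univ, true_and, Fintype.mem_piFinset, mem_powersetCard,
      subset_sdiff, subset_univ, disjoint_comm (a := T), ← forall_and]
    exact forall_congr' fun _ => and_comm
  rw [this, Fintype.card_piFinset_const, card_powersetCard, card_sdiff_of_subset (subset_univ T),
    card_univ, Fintype.card_fin]

lemma missed_eq_sum {n i : ℕ} (f : Fin i → Finset (Fin n)) :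
    missed f = ∑ c, if ∀ j, Disjoint {c} (f j) then 1 else 0 := by
  simp [missed, sum_boole]

lemma missed_sq_eq_sum {n i : ℕ} (f : Fin i → Finset (Fin n)) :
    missed f ^ 2 = ∑ c, ∑ c', if ∀ j, Disjoint {c, c'} (f j) then 1 else 0 := by
  simp only [missed_eq_sum, sq, sum_mul_sum, ite_zero_mul_ite_zero, mul_one, disjoint_insert_left,
    forall_and, disjoint_singleton_left]

lemma sum_missed (n s i : ℕ) :
    ∑ f ∈ draws n s i, missed f = n * (n - 1).choose s ^ i := by
  simp only [missed_eq_sum]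
  rw [sum_comm]
  simp only [sum_boole, card_draws_avoiding, card_singleton, sum_const, card_univ,
    Fintype.card_fin, smul_eq_mul, Nat.cast_id]

lemma sum_missed_sq (n s i : ℕ) :
    ∑ f ∈ draws n s i, missed f ^ 2
      = n * (n - 1).choose s ^ i + n * (n - 1) * (n - 2).choose s ^ i := by
  have pair (c c' : Fin n) : ∑ f ∈ draws n s i, (if ∀ j, Disjoint {c, c'} (f j) then 1 else 0)
      = if c = c' then (n - 1).choose s ^ i else (n - 2).choose s ^ i := by
    rw [sum_boole, card_draws_avoiding]
    split_ifs with h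
    · simp [h]
    · simp [card_pair h]
  have row (c : Fin n) : ∑ c', (if c = c' then (n - 1).choose s ^ i else (n - 2).choose s ^ i)
      = (n - 1).choose s ^ i + (n - 1) * (n - 2).choose s ^ i := by
    rw [← add_sum_erase _ _ (mem_univ c), if_pos rfl, sum_congr rfl fun c' hc' =>
      if_neg (ne_of_mem_erase hc').symm]
    simp [card_erase_of_mem]
  simp only [missed_sq_eq_sum]
  rw [sum_comm]
  simp only [sum_comm (s := draws n s i), pair, row, sum_const, card_univ, Fintype.card_fin,
    smul_eq_mul]
  ring

noncomputable def missProb (n s : ℕ) : ℝ := ((n - s : ℕ) : ℝ) / n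

lemma missProb_nonneg (n s : ℕ) : 0 ≤ missProb n s := by
  unfold missProb; positivity

lemma missProb_le_one (n s : ℕ) : missProb n s ≤ 1 :=
  div_le_one_of_le₀ (by exact_mod_cast Nat.sub_le n s) (Nat.cast_nonneg n)

lemma missProb_pred_le (n s : ℕ) : missProb (n - 1) s ≤ missProb n s := by
  rcases n with _ | m
  · simp
  rcases lt_or_ge m s with h | h
  · simpa [missProb, Nat.sub_eq_zero_of_le h.le] using missProb_nonneg (m + 1) s
  rcases m.eq_zero_or_pos with rfl | hm
  · simp [missProb]
  rw [missProb, missProb, Nat.add_sub_cancel, div_le_div_iff₀ (by positivity) (by positivity),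
    Nat.cast_sub h, Nat.cast_sub (by omega)]
  push_cast
  nlinarith

lemma choose_pred_eq (n s : ℕ) (hn : 0 < n) :
    ((n - 1).choose s : ℝ) = missProb n s * n.choose s := by
  obtain ⟨m, rfl⟩ := Nat.exists_eq_add_of_lt hn
  have h := Nat.choose_mul_succ_eq m s
  rw [missProb, div_mul_eq_mul_div, eq_div_iff (by positivity)]
  simp only [zero_add, Nat.add_sub_cancel] at h ⊢
  rw [mul_comm ((m + 1 - s : ℕ) : ℝ)]
  exact_mod_cast h

lemma choose_sub_two_le (n s : ℕ) (hn : 2 ≤ n) :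
    ((n - 2).choose s : ℝ) ≤ missProb n s ^ 2 * n.choose s := by
  rw [show n - 2 = n - 1 - 1 by omega, choose_pred_eq _ _ (by omega), choose_pred_eq _ _ (by omega),
    ← mul_assoc, sq]
  gcongr
  · exact missProb_nonneg n s
  · exact missProb_pred_le n s

lemma missed_ne_zero_iff {n i : ℕ} (f : Fin i → Finset (Fin n)) :
    missed f ≠ 0 ↔ ¬ collected f := by
  simp [missed, collected, filter_eq_empty_iff]

lemma sum_missed_eq (n s i : ℕ) :
    ∑ f ∈ draws n s i, (missed f : ℝ) = n * missProb n s ^ i * n.choose s ^ i := by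
  rcases n.eq_zero_or_pos with rfl | hn
  · simp [missed]
  rw [← Nat.cast_sum, sum_missed]
  push_cast
  rw [choose_pred_eq n s hn, mul_pow, mul_assoc]

lemma sum_missed_sq_le (n s i : ℕ) :
    ∑ f ∈ draws n s i, (missed f : ℝ) ^ 2
      ≤ (n * missProb n s ^ i + (n * missProb n s ^ i) ^ 2) * n.choose s ^ i := by
  have pairs : ((n * (n - 1) * (n - 2).choose s ^ i : ℕ) : ℝ)
      ≤ (n * missProb n s ^ i) ^ 2 * n.choose s ^ i := by
    rcases lt_or_ge n 2 with hn | hn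
    · rw [show n * (n - 1) = 0 by rcases n with _ | _ | _ <;> simp_all]
      simp only [zero_mul, Nat.cast_zero]
      positivity
    push_cast [Nat.cast_sub (by omega : 1 ≤ n)]
    calc (n : ℝ) * (n - 1) * (n - 2).choose s ^ i
        ≤ n ^ 2 * (missProb n s ^ 2 * n.choose s) ^ i := by
          gcongr
          · nlinarith
          · exact choose_sub_two_le n s hn
      _ = (n * missProb n s ^ i) ^ 2 * n.choose s ^ i := by ring
  have h := congrArg (Nat.cast (R := ℝ)) (sum_missed_sq n s i)
  push_cast at h
  rw [h, add_mul, ← sum_missed_eq, ← Nat.cast_sum, sum_missed]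
  push_cast at pairs ⊢
  linarith

lemma pr_nonneg (n s i : ℕ) (p : (Fin i → Finset (Fin n)) → Prop) : 0 ≤ pr n s i p := by
  unfold pr; positivity

lemma pr_le_one (n s i : ℕ) (p : (Fin i → Finset (Fin n)) → Prop) : pr n s i p ≤ 1 :=
  div_le_one_of_le₀ (by exact_mod_cast card_filter_le _ _) (Nat.cast_nonneg _)

lemma pr_not_collected_eq (n s i : ℕ) :
    pr n s i (¬ collected ·) = #{f ∈ draws n s i | missed f ≠ 0} / (n.choose s : ℝ) ^ i := by
  simp only [pr, missed_ne_zero_iff, card_draws, Nat.cast_pow]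
  congr!

lemma pr_not_collected_le (n s i : ℕ) (hs : s ≤ n) :
    pr n s i (¬ collected ·) ≤ n * missProb n s ^ i := by
  have hC : (0 : ℝ) < n.choose s ^ i := by have := Nat.choose_pos hs; positivity
  rw [pr_not_collected_eq, div_le_iff₀ hC, ← sum_missed_eq, ← Nat.cast_sum]
  exact_mod_cast card_filter_ne_zero_le_sum _ _

lemma le_pr_not_collected (n s i : ℕ) (hs : s ≤ n) :
    n * missProb n s ^ i / (1 + n * missProb n s ^ i) ≤ pr n s i (¬ collected ·) := by
  set a : ℝ := n * missProb n s ^ i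
  set N : ℝ := ((#{f ∈ draws n s i | missed f ≠ 0} : ℕ) : ℝ)
  have hC : (0 : ℝ) < n.choose s ^ i := by have := Nat.choose_pos hs; positivity
  have ha : 0 ≤ a := by have := missProb_nonneg n s; positivity
  rcases ha.eq_or_lt with ha0 | ha0
  · rw [← ha0, zero_div]
    exact pr_nonneg n s i _
  have hCS : (a * n.choose s ^ i) ^ 2 ≤ N * ((a + a ^ 2) * n.choose s ^ i) := by
    rw [← sum_missed_eq]
    refine (sq_sum_le_card_filter_ne_zero_mul_sum_sq _ _).trans ?_
    simp only [ne_eq, Nat.cast_eq_zero]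
    exact mul_le_mul_of_nonneg_left (sum_missed_sq_le n s i) (Nat.cast_nonneg _)
  rw [pr_not_collected_eq, div_le_div_iff₀ (by positivity) hC]
  nlinarith [mul_pos (mul_pos ha0 hC) hC]

lemma pr_add_pr_not (n s i : ℕ) (hs : s ≤ n) (p : (Fin i → Finset (Fin n)) → Prop) :
    pr n s i p + pr n s i (¬ p ·) = 1 := by
  have hN : (0 : ℝ) < #(draws n s i) := by
    rw [card_draws]; have := Nat.choose_pos hs; positivity
  rw [pr, pr, ← add_div, div_eq_one_iff_eq hN.ne', ← Nat.cast_add,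
    card_filter_add_card_filter_not]

lemma PYeq_succ (n s t : ℕ) (hs : s ≤ n) :
    PYeq n s (t + 1) = pr n s t (¬ collected ·) - pr n s (t + 1) (¬ collected ·) := by
  rw [PYeq, PYle, PYle, if_neg t.succ_ne_zero, Nat.add_sub_cancel]
  linarith [pr_add_pr_not n s t hs collected, pr_add_pr_not n s (t + 1) hs collected]

lemma summable_pr_not_collected (n s : ℕ) (hs : s ≤ n) (hq : missProb n s < 1) :
    Summable fun i => pr n s i (¬ collected ·) :=
  .of_nonneg_of_le (fun _ => pr_nonneg _ _ _ _) (pr_not_collected_le n s · hs)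
    ((summable_geometric_of_lt_one (missProb_nonneg n s) hq).mul_left _)

lemma tsum_pr_not_collected_add_le (n s k : ℕ) (hs : s ≤ n) (hq : missProb n s < 1) :
    ∑' i, pr n s (i + k) (¬ collected ·) ≤ n * missProb n s ^ k / (1 - missProb n s) := by
  have hgeom := summable_geometric_of_lt_one (missProb_nonneg n s) hq
  calc ∑' i, pr n s (i + k) (¬ collected ·)
      ≤ ∑' i, n * missProb n s ^ k * missProb n s ^ i := by
        refine Summable.tsum_le_tsum (fun i => ?_)
          ((summable_nat_add_iff k).2 (summable_pr_not_collected n s hs hq)) (hgeom.mul_left _)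
        rw [mul_assoc, ← pow_add, add_comm k]
        exact pr_not_collected_le n s (i + k) hs
    _ = n * missProb n s ^ k / (1 - missProb n s) := by
        rw [tsum_mul_left, tsum_geometric_of_lt_one (missProb_nonneg n s) hq, div_eq_mul_inv]

variable {s : ℕ → ℕ} {t : ℕ}

lemma tendsto_mul_missProb_pow_atTop (ht : 1 ≤ t)
    (hbig : Tendsto (fun n : ℕ => ((n - s n : ℕ) : ℝ) / (n : ℝ) ^ (((t : ℝ) - 1) / (t : ℝ)))
      atTop atTop) :
    Tendsto (fun n : ℕ => n * missProb n (s n) ^ t) atTop atTop := by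
  refine ((tendsto_pow_atTop (n := t) (by omega)).comp hbig).congr' ?_
  filter_upwards [eventually_gt_atTop 0] with n hn
  exact div_rpow_pow_eq _ (Nat.cast_pos.2 hn) ht

lemma tendsto_mul_missProb_pow_succ_zero
    (hsmall : Tendsto (fun n : ℕ => ((n - s n : ℕ) : ℝ) / (n : ℝ) ^ ((t : ℝ) / ((t : ℝ) + 1)))
      atTop (nhds 0)) :
    Tendsto (fun n : ℕ => n * missProb n (s n) ^ (t + 1)) atTop (nhds 0) := by
  have h := hsmall.pow (t + 1)
  rw [zero_pow t.succ_ne_zero] at h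
  refine h.congr' ?_
  filter_upwards [eventually_gt_atTop 0] with n hn
  have := div_rpow_pow_eq ((n - s n : ℕ) : ℝ) (Nat.cast_pos.2 hn) (Nat.le_add_left 1 t)
  push_cast at this
  rwa [add_sub_cancel_right] at this

lemma tendsto_missProb_zero
    (hsmall : Tendsto (fun n : ℕ => ((n - s n : ℕ) : ℝ) / (n : ℝ) ^ ((t : ℝ) / ((t : ℝ) + 1)))
      atTop (nhds 0)) :
    Tendsto (fun n : ℕ => missProb n (s n)) atTop (nhds 0) := by
  refine squeeze_zero' (.of_forall fun n => missProb_nonneg n (s n)) ?_ hsmall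
  filter_upwards [eventually_ge_atTop 1] with n hn
  have hn' : (1 : ℝ) ≤ n := by exact_mod_cast hn
  refine div_le_div_of_nonneg_left (Nat.cast_nonneg _) (by positivity) ?_
  exact Real.rpow_le_self_of_one_le hn' (div_le_one_of_le₀ (by linarith) (by positivity))

lemma tendsto_pr_not_collected_one (hs : ∀ n, s n ≤ n) (ht : 1 ≤ t)
    (hbig : Tendsto (fun n : ℕ => ((n - s n : ℕ) : ℝ) / (n : ℝ) ^ (((t : ℝ) - 1) / (t : ℝ)))
      atTop atTop) {i : ℕ} (hi : i ≤ t) :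
    Tendsto (fun n : ℕ => pr n (s n) i (¬ collected ·)) atTop (nhds 1) := by
  refine tendsto_of_tendsto_of_tendsto_of_le_of_le
    (tendsto_mul_missProb_pow_atTop ht hbig).div_one_add_self tendsto_const_nhds
    (fun n => ?_) (fun _ => pr_le_one _ _ _ _)
  have hq := missProb_nonneg n (s n)
  refine (div_one_add_le_div_one_add (by positivity) ?_).trans
    (le_pr_not_collected n (s n) i (hs n))
  exact mul_le_mul_of_nonneg_left (pow_le_pow_of_le_one hq (missProb_le_one n (s n)) hi)
    (Nat.cast_nonneg n)

lemma tendsto_pr_not_collected_zero (hs : ∀ n, s n ≤ n)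
    (hsmall : Tendsto (fun n : ℕ => ((n - s n : ℕ) : ℝ) / (n : ℝ) ^ ((t : ℝ) / ((t : ℝ) + 1)))
      atTop (nhds 0)) :
    Tendsto (fun n : ℕ => pr n (s n) (t + 1) (¬ collected ·)) atTop (nhds 0) :=
  squeeze_zero (fun _ => pr_nonneg _ _ _ _) (fun n => pr_not_collected_le n (s n) (t + 1) (hs n))
    (tendsto_mul_missProb_pow_succ_zero hsmall)

lemma tendsto_EY (hs : ∀ n, s n ≤ n) (ht : 1 ≤ t)
    (hsmall : Tendsto (fun n : ℕ => ((n - s n : ℕ) : ℝ) / (n : ℝ) ^ ((t : ℝ) / ((t : ℝ) + 1)))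
      atTop (nhds 0))
    (hbig : Tendsto (fun n : ℕ => ((n - s n : ℕ) : ℝ) / (n : ℝ) ^ (((t : ℝ) - 1) / (t : ℝ)))
      atTop atTop) :
    Tendsto (fun n : ℕ => EY n (s n)) atTop (nhds ((t : ℝ) + 1)) := by
  have hq_lt : ∀ᶠ n in atTop, missProb n (s n) < 1 :=
    (tendsto_missProb_zero hsmall).eventually_lt_const one_pos
  have head : Tendsto (fun n : ℕ => ∑ i ∈ range (t + 1), pr n (s n) i (¬ collected ·)) atTop
      (nhds ((t : ℝ) + 1)) := by
    simpa using tendsto_finsetSum (range (t + 1)) fun i hi =>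
      tendsto_pr_not_collected_one hs ht hbig (Nat.lt_succ_iff.1 (mem_range.1 hi))
  have tail : Tendsto (fun n : ℕ => ∑' i, pr n (s n) (i + (t + 1)) (¬ collected ·)) atTop
      (nhds 0) := by
    have hbound := (tendsto_mul_missProb_pow_succ_zero hsmall).div
      ((tendsto_missProb_zero hsmall).const_sub 1) (by norm_num)
    rw [zero_div] at hbound
    refine squeeze_zero' (.of_forall fun n => tsum_nonneg fun _ => pr_nonneg _ _ _ _) ?_ hbound
    filter_upwards [hq_lt] with n hq
    exact tsum_pr_not_collected_add_le n (s n) (t + 1) (hs n) hq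
  refine (add_zero ((t : ℝ) + 1) ▸ head.add tail).congr' ?_
  filter_upwards [hq_lt] with n hq
  exact (summable_pr_not_collected n (s n) (hs n) hq).sum_add_tsum_nat_add (t + 1)

end CouponCollector

open CouponCollector in
/-- Case III(b): if `n − s(n) = o(n^{t/(t+1)})` and `n − s(n) = ω(n^{(t−1)/t})`, then
`Y_n → t+1` in probability and `E[Y_n] → t+1`. -/
theorem stmt16 (t : ℕ) (ht : 1 ≤ t) (s : ℕ → ℕ) (hs : ∀ n, s n ≤ n)
    (hsmall : Tendsto
      (fun n : ℕ => ((n - s n : ℕ) : ℝ) / (n : ℝ) ^ ((t : ℝ) / ((t : ℝ) + 1)))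
      atTop (nhds 0))
    (hbig : Tendsto
      (fun n : ℕ => ((n - s n : ℕ) : ℝ) / (n : ℝ) ^ (((t : ℝ) - 1) / (t : ℝ)))
      atTop atTop) :
    Tendsto (fun n : ℕ => PYeq n (s n) (t + 1)) atTop (nhds 1) ∧
      Tendsto (fun n : ℕ => EY n (s n)) atTop (nhds ((t : ℝ) + 1)) := by
  refine ⟨?_, tendsto_EY hs ht hsmall hbig⟩
  have h := (tendsto_pr_not_collected_one hs ht hbig le_rfl).sub
    (tendsto_pr_not_collected_zero hs hsmall)
  rw [sub_zero] at h
  exact h.congr fun n => (PYeq_succ n (s n) t (hs n)).symm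
end

section
/- Let 0 < c < 1, s = cn, let k(n) = ⌊log_{1/(1−c)} n⌋ and α(n) = {log_{1/(1−c)} n} (the fractional part). Suppose (n_j) is an increasing sequence of integers with α(n_j) → α ∈ [0,1]. Then for each fixed integer i, the number X_{k(n_j)+i} of coupons missed after k(n_j)+i uniform s-subset draws converges in distribution to Po((1−c)^{i−α}) as j → ∞. -/
open Finset Filter
open scoped Classical

/-!
Inclusion–exclusion over the set of missed coupons gives the exact formula
`P(X_ℓ = k) = ∑_u (-1)^u / (k! u!) · E[(X_ℓ)_(k+u)]`, where the factorial moment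
`E[(X_ℓ)_r] = (n)_r (C(n-r,s) / C(n,s))^ℓ` is the product over `t < r` of
`(n - t) ((n - s - t) / (n - t))^ℓ`. With `s = cn` and `ℓ = ⌊log_{1/(1-c)} n⌋ + i` we have
`n (1-c)^ℓ = (1-c)^(i - α(n)) → μ = (1-c)^(i-α)` and `ℓ / n → 0`, so every factor tends to `μ`
and `E[(X_ℓ)_r] → μ^r`, while `E[(X_ℓ)_r] ≤ (n (1-c)^ℓ)^r ≤ ((1-c)^(i-1))^r`. Dominated
convergence turns the alternating series into `e^{-μ} ∑_u (-μ)^u μ^k / (k! u!) = e^{-μ} μ^k / k!`.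
-/

open scoped Nat Topology

theorem Finset.sum_powerset_filter_subset_neg_one_pow_card {α : Type*} [DecidableEq α]
    (S A : Finset α) :
    ∑ U ∈ S.powerset with U ⊆ A, (-1 : ℤ) ^ #U = if Disjoint S A then 1 else 0 := by
  have : {U ∈ S.powerset | U ⊆ A} = (S ∩ A).powerset := by
    ext U; simp only [mem_filter, mem_powerset, subset_inter_iff]
  rw [this, sum_powerset_neg_one_pow_card]
  exact if_congr disjoint_iff_inter_eq_empty.symm rfl rfl

theorem Finset.card_filter_eq_sum_powerset {α β : Type*} [Fintype α] [DecidableEq α]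
    (D : Finset β) (g : β → Finset α) (M : Finset α) :
    (#{x ∈ D | g x = M} : ℤ) = ∑ U ∈ Mᶜ.powerset, (-1 : ℤ) ^ #U * #{x ∈ D | M ∪ U ⊆ g x} := by
  simp_rw [card_filter, Nat.cast_sum, mul_sum]
  rw [sum_comm]
  refine sum_congr rfl fun x _ => ?_
  simp_rw [Nat.cast_ite, Nat.cast_one, Nat.cast_zero, mul_ite, mul_one, mul_zero]
  rw [← sum_filter]
  by_cases hM : M ⊆ g x
  · simp_rw [union_subset_iff, hM, true_and]
    rw [sum_powerset_filter_subset_neg_one_pow_card]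
    exact if_congr (disjoint_compl_left_iff.trans ⟨fun h => h.antisymm hM, fun h => h.le⟩).symm
      rfl rfl
  · have hne : g x ≠ M := fun h => hM h.ge
    rw [if_neg hne, filter_false_of_mem fun U _ h => hM (subset_union_left.trans h), sum_empty]

def missedSet {n i : ℕ} (f : Fin i → Finset (Fin n)) : Finset (Fin n) :=
  univ.filter fun t => ∀ j, t ∉ f j

/-- `E[(X_ℓ)_r]`: each of the `(n)_r` ordered `r`-tuples of distinct coupons is avoided by one
draw with probability `C(n-r,s) / C(n,s)`. -/
noncomputable def factorialMoment (n s ℓ r : ℕ) : ℝ :=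
  n.descFactorial r * ((n - r).choose s / n.choose s : ℝ) ^ ℓ

section Counting

variable {n s ℓ : ℕ}

theorem subset_missedSet_iff {f : Fin ℓ → Finset (Fin n)} {T : Finset (Fin n)} :
    T ⊆ missedSet f ↔ ∀ j, Disjoint T (f j) := by
  simp only [missedSet, subset_iff, mem_filter, mem_univ, true_and, disjoint_left]
  exact ⟨fun h j t ht => h ht j, fun h t ht j => h j ht⟩

theorem card_filter_subset_missedSet (T : Finset (Fin n)) :
    #{f ∈ draws n s ℓ | T ⊆ missedSet f} = (n - #T).choose s ^ ℓ := by
  have : {f ∈ draws n s ℓ | T ⊆ missedSet f} = Fintype.piFinset fun _ => Tᶜ.powersetCard s := by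
    ext f
    simp [draws, subset_missedSet_iff, mem_powersetCard, subset_compl_iff_disjoint_left,
      forall_and, and_comm]
  rw [this, Fintype.card_piFinset_const, card_powersetCard, card_compl, Fintype.card_fin]

theorem card_draws : #(draws n s ℓ) = n.choose s ^ ℓ := by
  simpa using card_filter_subset_missedSet (n := n) (s := s) (ℓ := ℓ) ∅

theorem card_filter_missedSet_eq (M : Finset (Fin n)) :
    (#{f ∈ draws n s ℓ | missedSet f = M} : ℤ) =
      ∑ u ∈ range (n - #M + 1), (-1 : ℤ) ^ u * (n - #M).choose u * (n - #M - u).choose s ^ ℓ := by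
  have hU : ∀ U ∈ Mᶜ.powerset, (-1 : ℤ) ^ #U * #{f ∈ draws n s ℓ | M ∪ U ⊆ missedSet f} =
      (-1) ^ #U * ((n - #M - #U).choose s ^ ℓ : ℕ) := by
    intro U hU
    rw [card_filter_subset_missedSet, card_union_of_disjoint
      (subset_compl_iff_disjoint_left.1 (mem_powerset.1 hU)), Nat.sub_add_eq]
  rw [card_filter_eq_sum_powerset, sum_congr rfl hU,
    sum_powerset_apply_card (fun u => (-1 : ℤ) ^ u * ((n - #M - u).choose s ^ ℓ : ℕ)),
    card_compl, Fintype.card_fin]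
  push_cast
  exact sum_congr rfl fun u _ => by rw [nsmul_eq_mul]; ring

theorem card_filter_missed_eq (k : ℕ) :
    (#{f ∈ draws n s ℓ | missed f = k} : ℤ) = n.choose k *
      ∑ u ∈ range (n - k + 1), (-1 : ℤ) ^ u * (n - k).choose u * (n - k - u).choose s ^ ℓ := by
  have hfib : ∀ M ∈ powersetCard k (univ : Finset (Fin n)),
      {f ∈ {f ∈ draws n s ℓ | missed f = k} | missedSet f = M} =
        {f ∈ draws n s ℓ | missedSet f = M} := by
    intro M hM
    rw [filter_filter]
    refine filter_congr fun f _ => and_iff_right_of_imp fun h => ?_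
    rw [missed, ← missedSet, h, (mem_powersetCard.1 hM).2]
  have hmaps : ∀ f ∈ {f ∈ draws n s ℓ | missed f = k}, missedSet f ∈ powersetCard k univ :=
    fun f hf => mem_powersetCard.2 ⟨subset_univ _, (mem_filter.1 hf).2⟩
  rw [card_eq_sum_card_fiberwise hmaps]
  push_cast
  rw [sum_congr rfl fun M hM => by rw [hfib M hM, card_filter_missedSet_eq,
    (mem_powersetCard.1 hM).2], sum_const, card_powersetCard, card_univ, Fintype.card_fin,
    nsmul_eq_mul]

theorem pr_missed_eq_tsum (hsn : s ≤ n) (k : ℕ) :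
    pr n s ℓ (fun f => missed f = k) =
      ∑' u, (-1) ^ u / (k ! * u ! : ℝ) * factorialMoment n s ℓ (k + u) := by
  have hvanish : ∀ u ∉ range (n - k + 1),
      (-1) ^ u / (k ! * u ! : ℝ) * factorialMoment n s ℓ (k + u) = 0 := by
    intro u hu
    rw [mem_range] at hu
    rw [factorialMoment, Nat.descFactorial_eq_zero_iff_lt.2 (by omega)]
    simp
  have hcard : (#{f ∈ draws n s ℓ | missed f = k} : ℝ) = n.choose k *
      ∑ u ∈ range (n - k + 1), (-1 : ℝ) ^ u * (n - k).choose u * (n - k - u).choose s ^ ℓ := by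
    exact_mod_cast card_filter_missed_eq k
  have hC : (n.choose s : ℝ) ≠ 0 := by exact_mod_cast (Nat.choose_pos hsn).ne'
  rw [tsum_eq_sum hvanish, pr, filter_congr_decidable, hcard, card_draws, Nat.cast_pow, mul_sum,
    sum_div]
  refine sum_congr rfl fun u _ => ?_
  have hdesc : (n.descFactorial (k + u) : ℝ) = k ! * u ! * (n.choose k * (n - k).choose u) := by
    rw [← Nat.descFactorial_mul_descFactorial (Nat.le_add_right k u), Nat.add_sub_cancel_left,
      Nat.descFactorial_eq_factorial_mul_choose, Nat.descFactorial_eq_factorial_mul_choose]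
    push_cast
    ring
  rw [factorialMoment, hdesc, Nat.sub_sub, div_pow]
  field_simp

end Counting

theorem tendsto_poisson_of_factorial_moments {ι : Type*} {l : Filter ι} {m : ι → ℕ → ℝ}
    {μ M : ℝ} (hlim : ∀ r, Tendsto (m · r) l (𝓝 (μ ^ r)))
    (hbound : ∀ᶠ j in l, ∀ r, |m j r| ≤ M ^ r) (k : ℕ) :
    Tendsto (fun j => ∑' u, (-1) ^ u / (k ! * u ! : ℝ) * m j (k + u)) l
      (𝓝 (Real.exp (-μ) * μ ^ k / k !)) := by
  have hsum : Summable fun u : ℕ => M ^ (k + u) / (k ! * u ! : ℝ) := by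
    refine ((Real.summable_pow_div_factorial M).mul_left (M ^ k / k !)).congr fun u => ?_
    rw [pow_add]
    ring
  have hpoisson : HasSum (fun u : ℕ => (-1) ^ u / (k ! * u ! : ℝ) * μ ^ (k + u))
      (Real.exp (-μ) * μ ^ k / k !) := by
    have := (NormedSpace.expSeries_div_hasSum_exp (-μ)).mul_left (μ ^ k / k !)
    rw [← Real.exp_eq_exp_ℝ, mul_comm, ← mul_div_assoc] at this
    refine this.congr_fun fun u => ?_
    rw [neg_pow, pow_add]
    ring
  rw [← hpoisson.tsum_eq]
  refine tendsto_tsum_of_dominated_convergence hsum (fun u => (hlim (k + u)).const_mul _) ?_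
  filter_upwards [hbound] with j hj u
  rw [Real.norm_eq_abs, abs_mul, abs_div, abs_pow, abs_neg, abs_one, one_pow,
    abs_of_pos (by positivity), one_div_mul_eq_div]
  gcongr
  exact hj _

theorem choose_sub_div_choose_eq_prod {n s r : ℕ} (h : r + s ≤ n) :
    ((n - r).choose s / n.choose s : ℝ) = ∏ t ∈ range r, ((n - s - t : ℝ) / (n - t)) := by
  induction r with
  | zero => simp [(Nat.choose_pos (by omega : s ≤ n)).ne']
  | succ r ih =>
    have hstep : ((n - (r + 1)).choose s : ℝ) * (n - r) = (n - r).choose s * (n - s - r) := by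
      have := congrArg (Nat.cast (R := ℝ)) (Nat.choose_mul_succ_eq (n - (r + 1)) s)
      rw [show n - (r + 1) + 1 = n - r by omega] at this
      push_cast [Nat.cast_sub (by omega : r ≤ n), Nat.cast_sub (by omega : s ≤ n - r)] at this
      linear_combination this
    have hnr : (n - r : ℝ) ≠ 0 := by
      rw [sub_ne_zero]; exact_mod_cast (by omega : n ≠ r)
    have hC : (n.choose s : ℝ) ≠ 0 := by exact_mod_cast (Nat.choose_pos (by omega : s ≤ n)).ne'
    rw [prod_range_succ, ← ih (by omega)]
    field_simp
    linear_combination hstep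

section FactorialMoment
variable {n s ℓ r : ℕ}

theorem factorialMoment_eq_prod (h : r + s ≤ n) :
    factorialMoment n s ℓ r = ∏ t ∈ range r, (n - t : ℝ) * ((n - s - t) / (n - t)) ^ ℓ := by
  rw [factorialMoment, choose_sub_div_choose_eq_prod h, prod_mul_distrib, prod_pow,
    Nat.descFactorial_eq_prod_range, Nat.cast_prod]
  congr 1
  exact prod_congr rfl fun t ht => Nat.cast_sub (by rw [mem_range] at ht; omega)

theorem factorialMoment_nonneg : 0 ≤ factorialMoment n s ℓ r := by
  unfold factorialMoment
  positivity

theorem factorialMoment_le (hsn : s ≤ n) :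
    factorialMoment n s ℓ r ≤ (n * ((n - s) / n : ℝ) ^ ℓ) ^ r := by
  have hq : 0 ≤ ((n - s) / n : ℝ) := div_nonneg (by simpa using hsn) n.cast_nonneg
  have hbound : 0 ≤ (n * ((n - s) / n : ℝ) ^ ℓ) ^ r := by positivity
  rcases Nat.eq_zero_or_pos ℓ with rfl | hℓ
  · simpa [factorialMoment] using (Nat.cast_le (α := ℝ)).2 (Nat.descFactorial_le_pow n r)
  rcases le_or_gt (r + s) n with h | h
  · rw [factorialMoment_eq_prod h]
    refine (prod_le_prod (fun t ht => ?_) fun t ht => ?_).trans_eq (by rw [prod_const, card_range])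
    all_goals
      have htn : (t : ℝ) < n := by rw [mem_range] at ht; exact_mod_cast (by omega : t < n)
      have hst : (s : ℝ) + t ≤ n := by rw [mem_range] at ht; exact_mod_cast (by omega : s + t ≤ n)
      have hρ : 0 ≤ (n - s - t : ℝ) / (n - t) := div_nonneg (by linarith) (by linarith)
    · exact mul_nonneg (by linarith) (pow_nonneg hρ _)
    · refine mul_le_mul (by linarith) (pow_le_pow_left₀ hρ ?_ _) (pow_nonneg hρ _) n.cast_nonneg
      rw [div_le_div_iff₀ (by linarith) (by linarith)]
      nlinarith [mul_nonneg (Nat.cast_nonneg (α := ℝ) s) (Nat.cast_nonneg (α := ℝ) t)]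
  · rcases le_or_gt r n with hr | hr
    · simpa [factorialMoment, Nat.choose_eq_zero_of_lt (by omega : n - r < s), hℓ.ne']
        using hbound
    · simpa [factorialMoment, Nat.descFactorial_eq_zero_iff_lt.2 hr] using hbound

end FactorialMoment

theorem tendsto_one_sub_pow_of_tendsto_mul {ι : Type*} {l : Filter ι} {ε : ι → ℝ} {ℓ : ι → ℕ}
    (hε : ∀ᶠ j in l, ε j ∈ Set.Icc (0 : ℝ) 1) (h : Tendsto (fun j => ℓ j * ε j) l (𝓝 0)) :
    Tendsto (fun j => (1 - ε j) ^ ℓ j) l (𝓝 1) := by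
  have hlow : Tendsto (fun j => 1 - ℓ j * ε j) l (𝓝 1) := by
    simpa using tendsto_const_nhds.sub h
  refine tendsto_of_tendsto_of_tendsto_of_le_of_le' hlow tendsto_const_nhds ?_ ?_
  · filter_upwards [hε] with j ⟨h0, h1⟩
    simpa [sub_eq_add_neg] using one_add_mul_le_pow (a := -ε j) (by linarith) (ℓ j)
  · filter_upwards [hε] with j ⟨h0, h1⟩
    exact pow_le_one₀ (by linarith) (by linarith)

theorem tendsto_sub_mul_div_pow {ι : Type*} {l : Filter ι} {c μ t : ℝ} (hc : 0 ≤ c)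
    (hc1 : c < 1) (ht : 0 ≤ t) {x : ι → ℝ} {ℓ : ι → ℕ} (hx : Tendsto x l atTop)
    (hμ : Tendsto (fun j => x j * (1 - c) ^ ℓ j) l (𝓝 μ))
    (hℓ : Tendsto (fun j => ℓ j / x j) l (𝓝 0)) :
    Tendsto (fun j => (x j - t) * ((x j - c * x j - t) / (x j - t)) ^ ℓ j) l (𝓝 μ) := by
  have h1c : 0 < 1 - c := by linarith
  set ε := fun j => c * t / ((1 - c) * (x j - t))
  have hlarge : ∀ᶠ j in l, t + (1 - c) ≤ (1 - c) * x j ∧ t < x j := by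
    filter_upwards [hx.eventually_ge_atTop (t / (1 - c) + 1)] with j hj
    have : t ≤ t / (1 - c) := le_div_self ht h1c (by linarith)
    rw [div_add_one h1c.ne', div_le_iff₀ h1c] at hj
    constructor <;> nlinarith
  have hshrink : Tendsto (fun j => 1 - t / x j) l (𝓝 1) := by
    simpa using tendsto_const_nhds.sub (tendsto_const_nhds.div_atTop hx)
  have hε : Tendsto (fun j => ℓ j * ε j) l (𝓝 0) := by
    have := (hℓ.mul_const (c * t / (1 - c))).mul (hshrink.inv₀ one_ne_zero)
    rw [zero_mul, zero_mul] at this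
    refine this.congr' ?_
    filter_upwards [hlarge] with j ⟨hj, htx⟩
    have : x j - t ≠ 0 := by linarith
    have : x j ≠ 0 := by linarith
    simp only [ε]
    field_simp
  have hε01 : ∀ᶠ j in l, ε j ∈ Set.Icc (0 : ℝ) 1 := by
    filter_upwards [hlarge] with j ⟨hj, htx⟩
    have hpos : 0 < (1 - c) * (x j - t) := mul_pos h1c (by linarith)
    exact ⟨by positivity, by rw [div_le_one hpos]; nlinarith⟩
  have := (hμ.mul hshrink).mul (tendsto_one_sub_pow_of_tendsto_mul hε01 hε)
  rw [mul_one, mul_one] at this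
  refine this.congr' ?_
  filter_upwards [hlarge] with j ⟨hj, htx⟩
  have : x j - t ≠ 0 := by linarith
  have : x j ≠ 0 := by linarith
  have hfactor : (x j - c * x j - t) / (x j - t) = (1 - c) * (1 - ε j) := by
    simp only [ε]
    field_simp
    ring
  rw [hfactor, mul_pow]
  field_simp

theorem tendsto_factorialMoment {ι : Type*} {l : Filter ι} {c μ : ℝ} (hc : 0 ≤ c) (hc1 : c < 1)
    {n s ℓ : ι → ℕ} (hn : Tendsto (fun j => (n j : ℝ)) l atTop)
    (hs : ∀ j, (s j : ℝ) = c * n j) (hμ : Tendsto (fun j => n j * (1 - c) ^ ℓ j) l (𝓝 μ))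
    (hℓ : Tendsto (fun j => (ℓ j : ℝ) / n j) l (𝓝 0)) (r : ℕ) :
    Tendsto (fun j => factorialMoment (n j) (s j) (ℓ j) r) l (𝓝 (μ ^ r)) := by
  have hprod := tendsto_finsetProd (range r) fun t _ =>
    tendsto_sub_mul_div_pow hc hc1 (Nat.cast_nonneg t) hn hμ hℓ
  rw [prod_const, card_range] at hprod
  refine hprod.congr' ?_
  filter_upwards [hn.eventually_ge_atTop (r / (1 - c))] with j hj
  have hrs : r + s j ≤ n j := by
    rw [div_le_iff₀ (by linarith)] at hj
    have : (r : ℝ) + s j ≤ n j := by rw [hs]; linarith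
    exact_mod_cast this
  rw [factorialMoment_eq_prod hrs, hs j]

section FloorLog

open Real

theorem mul_pow_toNat_floor_logb {q x : ℝ} (hq0 : 0 < q) (hq1 : q < 1) (hx : 0 < x) {i : ℤ}
    (hi : 0 ≤ ⌊logb (1 / q) x⌋ + i) :
    x * q ^ (⌊logb (1 / q) x⌋ + i).toNat = q ^ ((i : ℝ) - Int.fract (logb (1 / q) x)) := by
  have hx' : x = q ^ (-logb (1 / q) x) := by
    rw [rpow_neg hq0.le, ← inv_rpow hq0.le, ← one_div,
      rpow_logb (by positivity) (by rw [ne_eq, div_eq_one_iff_eq hq0.ne']; exact hq1.ne') hx]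
  have hpow : q ^ (⌊logb (1 / q) x⌋ + i).toNat = q ^ ((⌊logb (1 / q) x⌋ : ℝ) + i) := by
    rw [← rpow_natCast, ← Int.cast_natCast, Int.toNat_of_nonneg hi]
    push_cast
    rfl
  calc x * q ^ (⌊logb (1 / q) x⌋ + i).toNat
      = q ^ (-logb (1 / q) x) * q ^ ((⌊logb (1 / q) x⌋ : ℝ) + i) := by rw [← hx', hpow]
    _ = q ^ ((i : ℝ) - Int.fract (logb (1 / q) x)) := by
      rw [← rpow_add hq0, Int.fract]
      ring_nf

theorem tendsto_toNat_floor_logb_add_div {b : ℝ} (hb : 1 < b) (i : ℤ) :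
    Tendsto (fun x => ((⌊logb b x⌋ + i).toNat : ℝ) / x) atTop (𝓝 0) := by
  have hupper : Tendsto (fun x => (logb b x + i) / x) atTop (𝓝 0) := by
    have := (isLittleO_log_id_atTop.tendsto_div_nhds_zero.div_const (log b)).add
      ((tendsto_const_nhds (x := (i : ℝ))).div_atTop tendsto_id)
    rw [zero_div, add_zero] at this
    refine this.congr' ?_
    filter_upwards [eventually_gt_atTop 0] with x hx
    rw [logb, add_div, id, div_div, div_div, mul_comm]
  have hfloor := tendsto_floor_atTop.comp (tendsto_logb_atTop hb)
  refine tendsto_of_tendsto_of_tendsto_of_le_of_le' tendsto_const_nhds hupper ?_ ?_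
  · filter_upwards [eventually_gt_atTop 0] with x hx
    positivity
  · filter_upwards [hfloor.eventually_ge_atTop (-i), eventually_gt_atTop 0] with x hi hx
    rw [Function.comp_apply] at hi
    have hcast : ((⌊logb b x⌋ + i).toNat : ℝ) = ⌊logb b x⌋ + i := by
      rw [← Int.cast_natCast, Int.toNat_of_nonneg (by omega)]
      push_cast
      rfl
    rw [hcast]
    gcongr
    exact Int.floor_le _

variable {ι : Type*} {l : Filter ι} {q : ℝ} {x : ι → ℝ}

theorem eventually_mul_pow_toNat_floor_logb_eq (hq0 : 0 < q) (hq1 : q < 1)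
    (hx : Tendsto x l atTop) (i : ℤ) :
    ∀ᶠ j in l, x j * q ^ (⌊logb (1 / q) (x j)⌋ + i).toNat =
      q ^ ((i : ℝ) - Int.fract (logb (1 / q) (x j))) := by
  have hb : 1 < 1 / q := one_lt_one_div hq0 hq1
  have hfloor := tendsto_floor_atTop.comp ((tendsto_logb_atTop hb).comp hx)
  filter_upwards [hfloor.eventually_ge_atTop (-i), hx.eventually_gt_atTop 0] with j hj hxj
  exact mul_pow_toNat_floor_logb hq0 hq1 hxj (by simp only [Function.comp_apply] at hj; omega)

theorem tendsto_mul_pow_toNat_floor_logb (hq0 : 0 < q) (hq1 : q < 1)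
    (hx : Tendsto x l atTop) (i : ℤ) {α : ℝ}
    (hα : Tendsto (fun j => Int.fract (logb (1 / q) (x j))) l (𝓝 α)) :
    Tendsto (fun j => x j * q ^ (⌊logb (1 / q) (x j)⌋ + i).toNat) l (𝓝 (q ^ ((i : ℝ) - α))) :=
  (tendsto_const_nhds.rpow (tendsto_const_nhds.sub hα) (Or.inl hq0.ne')).congr'
    ((eventually_mul_pow_toNat_floor_logb_eq hq0 hq1 hx i).mono fun _ h => h.symm)

theorem eventually_mul_pow_toNat_floor_logb_le (hq0 : 0 < q) (hq1 : q < 1)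
    (hx : Tendsto x l atTop) (i : ℤ) :
    ∀ᶠ j in l, x j * q ^ (⌊logb (1 / q) (x j)⌋ + i).toNat ≤ q ^ ((i : ℝ) - 1) := by
  filter_upwards [eventually_mul_pow_toNat_floor_logb_eq hq0 hq1 hx i] with j hj
  rw [hj]
  exact rpow_le_rpow_of_exponent_ge hq0 hq1.le (by linarith [Int.fract_lt_one (logb (1 / q) (x j))])

end FloorLog

theorem stmt17_general (c : ℝ) (hc : 0 < c) (hc1 : c < 1)
    (nj : ℕ → ℕ) (hmono : StrictMono nj) (s : ℕ → ℕ)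
    (hs : ∀ j, (s j : ℝ) = c * nj j)
    (α : ℝ)
    (hconv : Tendsto (fun j => Int.fract (Real.logb (1 / (1 - c)) (nj j)))
      atTop (nhds α))
    (i : ℤ) :
    ∀ k : ℕ,
      Tendsto
        (fun j => pr (nj j) (s j)
            ((⌊Real.logb (1 / (1 - c)) (nj j)⌋ + i).toNat)
            (fun f => missed f = k))
        atTop
        (nhds (Real.exp (-((1 - c) ^ ((i : ℝ) - α)))
          * ((1 - c) ^ ((i : ℝ) - α)) ^ k / (k.factorial : ℝ))) := by
  intro k
  have h1c : 0 < 1 - c := by linarith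
  have hn : Tendsto (fun j => (nj j : ℝ)) atTop atTop :=
    tendsto_natCast_atTop_atTop.comp hmono.tendsto_atTop
  have hsn : ∀ j, s j ≤ nj j := fun j => by
    exact_mod_cast (hs j).trans_le (mul_le_of_le_one_left (nj j).cast_nonneg hc1.le)
  have hℓ := (tendsto_toNat_floor_logb_add_div (one_lt_one_div h1c (by linarith)) i).comp hn
  have hbound : ∀ᶠ j in atTop, ∀ r, |factorialMoment (nj j) (s j)
      (⌊Real.logb (1 / (1 - c)) (nj j)⌋ + i).toNat r| ≤ ((1 - c) ^ ((i : ℝ) - 1)) ^ r := by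
    filter_upwards [eventually_mul_pow_toNat_floor_logb_le h1c (by linarith) hn i,
      hn.eventually_gt_atTop 0] with j hj hj0 r
    have hratio : ((nj j : ℝ) - s j) / nj j = 1 - c := by rw [hs]; field_simp
    rw [abs_of_nonneg factorialMoment_nonneg]
    exact (hratio ▸ factorialMoment_le (hsn j)).trans (pow_le_pow_left₀ (by positivity) hj r)
  refine (tendsto_poisson_of_factorial_moments (fun r => tendsto_factorialMoment hc.le hc1 hn hs
    (tendsto_mul_pow_toNat_floor_logb h1c (by linarith) hn i hconv) hℓ r) hbound k).congr
    fun j => (pr_missed_eq_tsum (hsn j) k).symm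

/-- Case II: with `s = cn` along a sequence `n_j` with fractional part
`α(n_j) = {log_{1/(1−c)} n_j} → α`, the number of coupons missed after
`⌊log_{1/(1−c)} n_j⌋ + i` draws converges in distribution to `Po((1−c)^{i−α})`. -/
theorem stmt17 (c : ℝ) (hc : 0 < c) (hc1 : c < 1)
    (nj : ℕ → ℕ) (hmono : StrictMono nj) (s : ℕ → ℕ)
    (hs : ∀ j, (s j : ℝ) = c * nj j)
    (α : ℝ) (hα : α ∈ Set.Icc (0 : ℝ) 1)
    (hconv : Tendsto (fun j => Int.fract (Real.logb (1 / (1 - c)) (nj j)))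
      atTop (nhds α))
    (i : ℤ) :
    ∀ k : ℕ,
      Tendsto
        (fun j => pr (nj j) (s j)
            ((⌊Real.logb (1 / (1 - c)) (nj j)⌋ + i).toNat)
            (fun f => missed f = k))
        atTop
        (nhds (Real.exp (-((1 - c) ^ ((i : ℝ) - α)))
          * ((1 - c) ^ ((i : ℝ) - α)) ^ k / (k.factorial : ℝ))) :=
  stmt17_general c hc hc1 nj hmono s hs α hconv i
end
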